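/- arXiv:1310.8511 — 4 statements merged into one kernel-verified Lean document; each statement's English description precedes it below -/
import Mathlib

section
/- Let Q be a stationary probability measure on Ω = {1,...,D}^ℤ and for each n let P assign to every string x_1^n over {1,...,D} a value P(x_1^n) > 0 with Σ_{x_1^n} P(x_1^n) ≤ 1. Suppose P is weakly universal for Q in the sense that lim_{n→∞} (1/n)·E_Q[−log P(X_1^n)] = h_Q. Then for infinitely many n, E_Q[I^P(X_1^n; X_{n+1}^{2n})] ≥ E_Q[I^Q(X_1^n; X_{n+1}^{2n})], where for a distribution R the pointwise mutual information is I^R(X;Y) = −log R(X) − log R(Y) + log R(X,Y). -/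
/-! Write `c n = E_Q[−log P(X_1^n)] − E_Q[−log Q(X_1^n)]` for the excess code length of `P`.
Gibbs' inequality makes `c n ≥ 0`, weak universality makes `c n / n → 0`, and the inequality to
prove at `n` is exactly `c (2n) ≤ 2 c n`. If it failed for all `n ≥ N`, then `c n / n` would
strictly increase along `2^k (N + 1)` from a nonnegative value, contradicting `c n / n → 0`. -/

open Filter MeasureTheory
open scoped Topology

/-- The prefix `x_1^n` of the one-sided sequence `x` (0-indexed: `x i = x_{i+1}`). -/
def pref {D : ℕ} (x : ℕ → Fin D) (n : ℕ) : List (Fin D) :=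
  (List.range n).map x

/-- The two-sided sequence space `Ω = {1,...,D}^ℤ` with the product σ-algebra. -/
abbrev Omega (D : ℕ) := ℤ → Fin D

/-- The shift `T : Ω → Ω`. -/
def shiftT (D : ℕ) : Omega D → Omega D := fun ω i => ω (i + 1)

/-- The cylinder set `{X_1 = x 0, ..., X_n = x (n-1)}`. -/
def cylSet (D : ℕ) (x : ℕ → Fin D) (n : ℕ) : Set (Omega D) :=
  {ω | ∀ i < n, ω ((i : ℤ) + 1) = x i}

/-- The one-sided sample path `X_1, X_2, ...` of `ω` (0-indexed). -/
def path (D : ℕ) (ω : Omega D) : ℕ → Fin D := fun i => ω ((i : ℤ) + 1)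

/-- The cylinder probability `Q(x_1^n)`. -/
noncomputable def Qstr (D : ℕ) (Q : Measure (Omega D)) (x : ℕ → Fin D) (n : ℕ) : ℝ :=
  (Q (cylSet D x n)).toReal

open Real

lemma sub_le_mul_sub_log {p q : ℝ} (hq : 0 ≤ q) (hp : 0 < p) :
    q - p ≤ q * (log q - log p) := by
  rcases hq.eq_or_lt with rfl | hq
  · simp [hp.le]
  have h := self_sub_one_le_mul_log (div_nonneg hq.le hp.le)
  rwa [log_div hq.ne' hp.ne', div_mul_eq_mul_div, div_sub_one hp.ne',
    div_le_div_iff_of_pos_right hp] at h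

lemma sum_mul_neg_log_le {ι : Type*} [Fintype ι] {q p : ι → ℝ} (hq : ∀ i, 0 ≤ q i)
    (hq1 : ∑ i, q i = 1) (hp : ∀ i, 0 < p i) (hp1 : ∑ i, p i ≤ 1) :
    ∑ i, q i * -log (q i) ≤ ∑ i, q i * -log (p i) := by
  have h := Finset.sum_le_sum fun i (_ : i ∈ Finset.univ) => sub_le_mul_sub_log (hq i) (hp i)
  simp only [Finset.sum_sub_distrib, mul_sub, mul_neg, Finset.sum_neg_distrib] at h ⊢
  linarith

lemma integral_neg_log_measureReal_singleton_le {ι : Type*} [Fintype ι] [MeasurableSpace ι]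
    [MeasurableSingletonClass ι] (μ : Measure ι) [IsProbabilityMeasure μ] {p : ι → ℝ}
    (hp : ∀ i, 0 < p i) (hp1 : ∑ i, p i ≤ 1) :
    ∫ x, -log (μ.real {x}) ∂μ ≤ ∫ x, -log (p x) ∂μ := by
  simp only [integral_fintype .of_finite, smul_eq_mul]
  exact sum_mul_neg_log_le (fun _ => measureReal_nonneg) (by simp) hp hp1

def firstCoords (D n : ℕ) (ω : Omega D) : Fin n → Fin D := fun i => path D ω i

lemma measurable_firstCoords (D n : ℕ) : Measurable (firstCoords D n) :=
  measurable_pi_iff.2 fun _ => measurable_pi_apply _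

lemma pref_path_eq_ofFn {D : ℕ} (ω : Omega D) (n : ℕ) :
    pref (path D ω) n = List.ofFn (firstCoords D n ω) := by
  apply List.ext_getElem <;> simp [pref, firstCoords]

lemma Qstr_path_eq {D : ℕ} (Q : Measure (Omega D)) (ω : Omega D) (n : ℕ) :
    Qstr D Q (path D ω) n = (Q.map (firstCoords D n)).real {firstCoords D n ω} := by
  have hcyl : cylSet D (path D ω) n = firstCoords D n ⁻¹' {firstCoords D n ω} := by
    ext ω'
    simp only [cylSet, Set.mem_ofPred_eq, Set.mem_preimage, Set.mem_singleton_iff, funext_iff,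
      firstCoords, path, Fin.forall_iff]
  rw [Qstr, hcyl, measureReal_def,
    Measure.map_apply (measurable_firstCoords D n) (measurableSet_singleton _)]

lemma integral_neg_log_Qstr_le_integral_neg_log {D : ℕ} (Q : Measure (Omega D))
    [IsProbabilityMeasure Q] (P : List (Fin D) → ℝ) (hPpos : ∀ xs, 0 < P xs) (n : ℕ)
    (hPsum : ∑ v : Fin n → Fin D, P (List.ofFn v) ≤ 1) :
    ∫ ω, -log (Qstr D Q (path D ω) n) ∂Q ≤ ∫ ω, -log (P (pref (path D ω) n)) ∂Q := by
  have hmeas := (measurable_firstCoords D n).aemeasurable (μ := Q)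
  have := Measure.isProbabilityMeasure_map hmeas
  simp only [Qstr_path_eq, pref_path_eq_ofFn]
  rw [← integral_map (f := fun v => -log ((Q.map (firstCoords D n)).real {v})) hmeas
      (measurable_of_countable _).aestronglyMeasurable,
    ← integral_map (f := fun v => -log (P (List.ofFn v))) hmeas
      (measurable_of_countable _).aestronglyMeasurable]
  exact integral_neg_log_measureReal_singleton_le _ (fun _ => hPpos _) hPsum

lemma frequently_le_two_mul_of_tendsto_div_zero {c : ℕ → ℝ} (hc0 : ∀ n, 0 ≤ c n)
    (hc : Tendsto (fun n : ℕ => c n / n) atTop (𝓝 0)) :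
    ∃ᶠ n in atTop, c (2 * n) ≤ 2 * c n := by
  by_contra h
  obtain ⟨N, hN⟩ := eventually_atTop.1 (not_frequently.1 h)
  set m := N + 1
  set d : ℕ → ℝ := (fun n : ℕ => c n / n) ∘ fun k => 2 ^ k * m
  have hd_strictMono : StrictMono d := strictMono_nat_of_lt_succ fun k => by
    have hNk : N ≤ 2 ^ k * m := (Nat.le_succ N).trans (Nat.le_mul_of_pos_left m (by positivity))
    have h2 := not_le.1 (hN _ hNk)
    have hk : (0 : ℝ) < 2 ^ k * m := by positivity
    simp only [d, Function.comp, pow_succ, mul_comm _ 2, mul_assoc] at h2 ⊢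
    rw [div_lt_div_iff₀ (by positivity) (by positivity)]
    push_cast at h2 ⊢
    nlinarith [mul_lt_mul_of_pos_right h2 hk]
  have hd_lim : Tendsto d atTop (𝓝 0) :=
    hc.comp (tendsto_atTop_mono (fun k => Nat.le_mul_of_pos_right _ (Nat.succ_pos N))
      (tendsto_pow_atTop_atTop_of_one_lt one_lt_two))
  have hd0 : 0 ≤ d 0 := div_nonneg (hc0 _) (Nat.cast_nonneg _)
  linarith [hd_strictMono (Nat.zero_lt_one), hd_strictMono.monotone.ge_of_tendsto hd_lim 1]

theorem universal_code_mutual_information_bound_general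
    (D : ℕ)
    (Q : Measure (Omega D)) [IsProbabilityMeasure Q]
    (P : List (Fin D) → ℝ)
    (hPpos : ∀ xs : List (Fin D), 0 < P xs)
    (hPsum : ∀ n : ℕ, ∑ v : Fin n → Fin D, P (List.ofFn v) ≤ 1)
    (hQ : ℝ)
    (hent : Tendsto
      (fun n : ℕ => (∫ ω, -Real.log (Qstr D Q (path D ω) n) ∂Q) / n) atTop (𝓝 hQ))
    (huniv : Tendsto
      (fun n : ℕ => (∫ ω, -Real.log (P (pref (path D ω) n)) ∂Q) / n) atTop (𝓝 hQ)) :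
    ∃ᶠ n in atTop,
      2 * (∫ ω, -Real.log (Qstr D Q (path D ω) n) ∂Q) -
          (∫ ω, -Real.log (Qstr D Q (path D ω) (2 * n)) ∂Q) ≤
        2 * (∫ ω, -Real.log (P (pref (path D ω) n)) ∂Q) -
          (∫ ω, -Real.log (P (pref (path D ω) (2 * n))) ∂Q) := by
  set A : ℕ → ℝ := fun n => ∫ ω, -log (Qstr D Q (path D ω) n) ∂Q
  set B : ℕ → ℝ := fun n => ∫ ω, -log (P (pref (path D ω) n)) ∂Q
  have hgap_nonneg : ∀ n, 0 ≤ B n - A n := fun n =>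
    sub_nonneg.2 (integral_neg_log_Qstr_le_integral_neg_log Q P hPpos n (hPsum n))
  have hgap_sublinear : Tendsto (fun n : ℕ => (B n - A n) / n) atTop (𝓝 0) := by
    simpa [sub_div] using huniv.sub hent
  exact (frequently_le_two_mul_of_tendsto_div_zero hgap_nonneg hgap_sublinear).mono
    fun n hn => by linarith

/-- Let `Q` be a stationary probability measure on `Ω = {1,...,D}^ℤ` and let `P` assign
to every string a positive value, summing to at most `1` over the strings of each
length `n`.  If `P` is weakly universal for `Q`, i.e.
`lim (1/n) E_Q[−log P(X_1^n)] = h_Q` where `h_Q = lim (1/n) E_Q[−log Q(X_1^n)]` is the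
entropy rate, then `E_Q[I^P(X_1^n; X_{n+1}^{2n})] ≥ E_Q[I^Q(X_1^n; X_{n+1}^{2n})]`
holds for infinitely many `n`, where (using stationarity)
`E_Q[I^R(X_1^n; X_{n+1}^{2n})] = 2·E_Q[−log R(X_1^n)] − E_Q[−log R(X_1^{2n})]`. -/
theorem universal_code_mutual_information_bound
    (D : ℕ) (hD : 0 < D)
    (Q : Measure (Omega D)) [IsProbabilityMeasure Q]
    (hstat : MeasurePreserving (shiftT D) Q Q)
    (P : List (Fin D) → ℝ)
    (hPpos : ∀ xs : List (Fin D), 0 < P xs)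
    (hPsum : ∀ n : ℕ, ∑ v : Fin n → Fin D, P (List.ofFn v) ≤ 1)
    (hQ : ℝ)
    (hent : Tendsto
      (fun n : ℕ => (∫ ω, -Real.log (Qstr D Q (path D ω) n) ∂Q) / n) atTop (𝓝 hQ))
    (huniv : Tendsto
      (fun n : ℕ => (∫ ω, -Real.log (P (pref (path D ω) n)) ∂Q) / n) atTop (𝓝 hQ)) :
    ∃ᶠ n in atTop,
      2 * (∫ ω, -Real.log (Qstr D Q (path D ω) n) ∂Q) -
          (∫ ω, -Real.log (Qstr D Q (path D ω) (2 * n)) ∂Q) ≤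
        2 * (∫ ω, -Real.log (P (pref (path D ω) n)) ∂Q) -
          (∫ ω, -Real.log (P (pref (path D ω) (2 * n))) ∂Q) :=
  universal_code_mutual_information_bound_general D Q P hPpos hPsum hQ hent huniv
end

section
/- The plain switch distribution is a consistent probability assignment on strings: for every n ≥ 1, Σ_{x_1^n} P(x_1^n) = 1 where the sum runs over all strings of length n over {1,...,D}, and moreover Σ_{a=1}^{D} P(x_1^n a) = P(x_1^n) for every string x_1^n, where x_1^n a denotes x_1^n extended by the symbol a. -/
open Filter MeasureTheory
open scoped Topology

/-- Number of occurrences `c(w|z)` of `w` as a substring of `z`. -/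
def cnt {D : ℕ} (w z : List (Fin D)) : ℕ :=
  ((List.range (z.length - w.length + 1)).filter
    (fun i => (z.drop i).take w.length = w)).length

/-- Count `c(w | z_1^{m-1})` of `w` in the string `z` with its last symbol removed,
with the convention that counting in a block of length `-1` (i.e. when `z` itself is
empty) gives `0`. -/
def cntPred {D : ℕ} (w z : List (Fin D)) : ℕ :=
  if z = [] then 0 else cnt w z.dropLast

/-- Adaptive Markov predictor: the natural-number index corresponds to the Markov
order shifted by one, so `Bpred D xs a (k+1) = B(a | xs, k)` and
`Bpred D xs a 0 = B(a | xs, -1) = 1/D`, where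
`B(x_{n+1}|x_1^n, k) = (c(x_{n+1-k}^{n+1}|x_1^n) + B(x_{n+1}|x_1^n, k-1)) /
(c(x_{n+1-k}^{n}|x_1^{n-1}) + 1)`.  Counts of substrings whose indices fall outside
the string are taken to be zero. -/
noncomputable def Bpred (D : ℕ) (xs : List (Fin D)) (a : Fin D) : ℕ → ℝ
  | 0 => 1 / D
  | k + 1 =>
    if k ≤ xs.length then
      ((cnt (xs.drop (xs.length - k) ++ [a]) xs : ℝ) + Bpred D xs a k) /
      ((cntPred (xs.drop (xs.length - k)) xs : ℝ) + 1)
    else Bpred D xs a k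

/-- Partial switch distribution `P(x_1^n, k)` with Markov order `k : ℤ`:
`P(x_1,-1) = p_0 B(x_1|-1)`, `P(x_1,0) = (1-p_0) B(x_1|0)`, `P(x_1^n,k) = 0`
for `k < -1` or `k ≥ n`, and
`P(x_1^{n+1},k) = [p_n P(x_1^n,k) + (1-p_n) P(x_1^n,k-1)] B(x_{n+1}|x_1^n,k)`. -/
noncomputable def Ppart (D : ℕ) (p : ℕ → ℝ) (x : ℕ → Fin D) : ℕ → ℤ → ℝ
  | 0, _ => 0
  | 1, k =>
    if k = -1 then p 0 * Bpred D [] (x 0) 0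
    else if k = 0 then (1 - p 0) * Bpred D [] (x 0) 1
    else 0
  | n + 2, k =>
    if -1 ≤ k ∧ k ≤ (n : ℤ) + 1 then
      (p (n + 1) * Ppart D p x (n + 1) k +
        (1 - p (n + 1)) * Ppart D p x (n + 1) (k - 1)) *
        Bpred D (pref x (n + 1)) (x (n + 1)) (k + 1).toNat
    else 0

/-- The plain switch distribution `P(x_1^n) = Σ_{k=-1}^{n-1} P(x_1^n, k)`. -/
noncomputable def swP (D : ℕ) (p : ℕ → ℝ) (x : ℕ → Fin D) (n : ℕ) : ℝ :=
  ∑ kk ∈ Finset.range (n + 1), Ppart D p x n ((kk : ℤ) - 1)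

lemma countP_range_eq {m : ℕ} (p : ℕ → Prop) [DecidablePred p] :
    List.countP (fun i => decide (p i)) (List.range m) = ∑ i ∈ Finset.range m, if p i then 1 else 0 := by
  induction m with
  | zero => simp
  | succ n ih => rw [List.range_succ, Finset.sum_range_succ, List.countP_append, ih]; simp [List.countP_cons]

lemma cnt_eq {D : ℕ} (w z : List (Fin D)) :
    cnt w z = ∑ i ∈ Finset.range (z.length - w.length + 1),
      if (z.drop i).take w.length = w then 1 else 0 := by
  rw [← countP_range_eq]
  simp only [cnt]
  rw [← List.countP_eq_length_filter]

-- per-index lemma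

lemma per_i {D : ℕ} (w z : List (Fin D)) (i : ℕ) (hi : i < z.length) :
    ∑ a : Fin D, (if (z.drop i).take (w.length + 1) = w ++ [a] then 1 else 0 : ℕ)
      = if (z.dropLast.drop i).take w.length = w then 1 else 0 := by
  set k := w.length with hk
  set n := z.length with hn
  rcases lt_or_ge (i + k) n with h | h
  · -- z[i+k] exists
    have hb : (z.drop i)[k]? = some (z[i+k]'h) := by
      rw [List.getElem?_drop]
      exact List.getElem?_eq_getElem h
    have hts : (z.drop i).take (k+1) = (z.drop i).take k ++ [z[i+k]'h] := by
      rw [List.take_succ, hb]; rfl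
    have key : ∀ a : Fin D, ((z.drop i).take (k+1) = w ++ [a]) ↔
        ((z.drop i).take k = w ∧ (z[i+k]'h) = a) := by
      intro a
      rw [hts]
      constructor
      · intro hh
        have := List.append_inj' hh (by simp)
        exact ⟨this.1, by simpa using this.2⟩
      · rintro ⟨h1, h2⟩; rw [h1, h2]
    have hrhs : (z.dropLast.drop i).take k = (z.drop i).take k := by
      rw [List.dropLast_eq_take]
      rw [List.drop_take]
      rw [List.take_take]
      congr 1
      omega
    simp only [key, hrhs]
    by_cases hP : (z.drop i).take k = w
    · simp [hP, Finset.sum_ite_eq]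
    · simp [hP]
  · have h1 : ∀ a : Fin D, ¬ ((z.drop i).take (k+1) = w ++ [a]) := by
      intro a heq
      have := congrArg List.length heq
      simp at this
      omega
    have h2 : ¬ ((z.dropLast.drop i).take k = w) := by
      intro heq
      have := congrArg List.length heq
      simp at this
      omega
    simp [h1, h2]

lemma sum_cnt {D : ℕ} (w z : List (Fin D)) :
    ∑ a : Fin D, cnt (w ++ [a]) z = cntPred w z := by
  rcases eq_or_ne z [] with rfl | hz
  · have : ∀ a : Fin D, cnt (w ++ [a]) ([] : List (Fin D)) = 0 := by
      intro a
      simp [cnt_eq]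
    simp [this, cntPred]
  · rw [cntPred, if_neg hz]
    have hn : 1 ≤ z.length := by
      cases z with
      | nil => exact absurd rfl hz
      | cons _ _ => simp
    have hrange : z.length - (w.length + 1) + 1 = z.dropLast.length - w.length + 1 := by
      rw [List.length_dropLast]; omega
    simp only [cnt_eq]
    simp only [List.length_append, List.length_singleton]
    rw [Finset.sum_comm]
    rw [← hrange]
    refine Finset.sum_congr rfl fun i hi => ?_
    have hi' : i < z.length := by
      rw [Finset.mem_range] at hi; omega
    exact per_i w z i hi'

lemma sum_Bpred {D : ℕ} (hD : 0 < D) (xs : List (Fin D)) :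
    ∀ m, ∑ a : Fin D, Bpred D xs a m = 1 := by
  intro m
  induction m with
  | zero =>
    simp [Bpred]
    field_simp
  | succ k ih =>
    by_cases h : k ≤ xs.length
    · simp only [Bpred, if_pos h]
      rw [← Finset.sum_div, Finset.sum_add_distrib, ih]
      have hc : ∑ a : Fin D, (cnt (xs.drop (xs.length - k) ++ [a]) xs : ℝ)
          = (cntPred (xs.drop (xs.length - k)) xs : ℝ) := by
        rw [← Nat.cast_sum]
        exact_mod_cast congrArg (Nat.cast : ℕ → ℝ) (sum_cnt (xs.drop (xs.length - k)) xs)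
      rw [hc]
      have : ((cntPred (xs.drop (xs.length - k)) xs : ℝ) + 1) ≠ 0 := by positivity
      field_simp
    · simp only [Bpred, if_neg h]
      exact ih

lemma pref_congr {D : ℕ} {x y : ℕ → Fin D} {n : ℕ} (h : ∀ i < n, x i = y i) :
    pref x n = pref y n := by
  unfold pref
  exact List.map_congr_left fun i hi => h i (List.mem_range.mp hi)

lemma Ppart_congr {D : ℕ} (p : ℕ → ℝ) :
    ∀ n (x y : ℕ → Fin D), (∀ i < n, x i = y i) → ∀ k, Ppart D p x n k = Ppart D p y n k := by
  intro n
  induction n using Nat.strong_induction_on with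
  | _ n ih =>
    match n with
    | 0 => intro x y h k; rfl
    | 1 => intro x y h k; simp only [Ppart, h 0 (by norm_num)]
    | (m+2) =>
      intro x y h k
      simp only [Ppart]
      rw [ih (m+1) (by omega) x y (fun i hi => h i (by omega)),
        ih (m+1) (by omega) x y (fun i hi => h i (by omega)),
        pref_congr (fun i hi => h i (by omega)), h (m+1) (by omega)]

lemma Ppart_zero {D : ℕ} (p : ℕ → ℝ) (x : ℕ → Fin D) (n : ℕ) (k : ℤ)
    (hk : (n : ℤ) ≤ k ∨ k < -1) : Ppart D p x n k = 0 := by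
  match n with
  | 0 => rfl
  | 1 =>
    simp only [Ppart]
    rw [if_neg (by omega), if_neg (by omega)]
  | (m+2) =>
    simp only [Ppart]
    rw [if_neg (by push_cast at hk ⊢; omega)]

lemma sum_a_Ppart {D : ℕ} (hD : 0 < D) (p : ℕ → ℝ) (x : ℕ → Fin D) (n : ℕ) (hn : 1 ≤ n)
    (k : ℤ) (hk1 : -1 ≤ k) (hk2 : k ≤ (n : ℤ)) :
    ∑ a : Fin D, Ppart D p (Function.update x n a) (n + 1) k
      = p n * Ppart D p x n k + (1 - p n) * Ppart D p x n (k - 1) := by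
  obtain ⟨m, rfl⟩ : ∃ m, n = m + 1 := ⟨n - 1, by omega⟩
  have hcond : -1 ≤ k ∧ k ≤ (m : ℤ) + 1 := ⟨hk1, by push_cast at hk2 ⊢; omega⟩
  have hagree : ∀ a : Fin D, ∀ i < m + 1, Function.update x (m+1) a i = x i := by
    intro a i hi
    exact Function.update_of_ne (by omega) _ _
  have hPy : ∀ (a : Fin D) (j : ℤ),
      Ppart D p (Function.update x (m+1) a) (m+1) j = Ppart D p x (m+1) j := by
    intro a j
    exact Ppart_congr p (m+1) _ _ (hagree a) j
  have hyv : ∀ a : Fin D, Function.update x (m+1) a (m+1) = a := fun a =>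
    Function.update_self _ _ _
  have hpr : ∀ a : Fin D, pref (Function.update x (m+1) a) (m+1) = pref x (m+1) := fun a =>
    pref_congr (hagree a)
  have : ∀ a : Fin D, Ppart D p (Function.update x (m+1) a) (m + 1 + 1) k
      = (p (m+1) * Ppart D p x (m+1) k + (1 - p (m+1)) * Ppart D p x (m+1) (k-1)) *
        Bpred D (pref x (m+1)) a (k+1).toNat := by
    intro a
    show Ppart D p (Function.update x (m+1) a) (m + 2) k = _
    simp only [Ppart, if_pos hcond, hPy, hyv, hpr]
  rw [Finset.sum_congr rfl (fun a _ => this a), ← Finset.mul_sum,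
    sum_Bpred hD (pref x (m+1)) ((k+1).toNat), mul_one]

lemma swP_consistent {D : ℕ} (hD : 0 < D) (p : ℕ → ℝ) (x : ℕ → Fin D) (n : ℕ) (hn : 1 ≤ n) :
    ∑ a : Fin D, swP D p (Function.update x n a) (n + 1) = swP D p x n := by
  unfold swP
  rw [Finset.sum_comm]
  have step : ∀ kk ∈ Finset.range (n + 1 + 1),
      ∑ a : Fin D, Ppart D p (Function.update x n a) (n + 1) ((kk : ℤ) - 1)
        = p n * Ppart D p x n ((kk : ℤ) - 1) + (1 - p n) * Ppart D p x n ((kk : ℤ) - 2) := by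
    intro kk hkk
    rw [Finset.mem_range] at hkk
    rw [sum_a_Ppart hD p x n hn _ (by omega) (by push_cast; omega)]
    ring_nf
  rw [Finset.sum_congr rfl step, Finset.sum_add_distrib, ← Finset.mul_sum, ← Finset.mul_sum]
  have e1 : ∑ kk ∈ Finset.range (n + 1 + 1), Ppart D p x n ((kk : ℤ) - 1)
      = ∑ kk ∈ Finset.range (n + 1), Ppart D p x n ((kk : ℤ) - 1) := by
    rw [Finset.sum_range_succ, Ppart_zero p x n _ (by push_cast; omega), add_zero]
  have e2 : ∑ kk ∈ Finset.range (n + 1 + 1), Ppart D p x n ((kk : ℤ) - 2)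
      = ∑ kk ∈ Finset.range (n + 1), Ppart D p x n ((kk : ℤ) - 1) := by
    rw [Finset.sum_range_succ' (fun kk => Ppart D p x n ((kk : ℤ) - 2)) (n+1)]
    rw [show ((0:ℕ):ℤ) - 2 = -2 by norm_num, Ppart_zero p x n (-2) (by omega), add_zero]
    refine Finset.sum_congr rfl fun j hj => ?_
    congr 1
    push_cast
    ring
  rw [e1, e2, ← add_mul]
  ring

lemma swP_congr {D : ℕ} (p : ℕ → ℝ) {x y : ℕ → Fin D} {n : ℕ} (h : ∀ i < n, x i = y i) :
    swP D p x n = swP D p y n :=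
  Finset.sum_congr rfl fun kk _ => Ppart_congr p n x y h _

lemma Bpred_nil_one {D : ℕ} (a : Fin D) : Bpred D [] a 1 = 1 / D := by
  have h0 : cnt ([a]) ([] : List (Fin D)) = 0 := by
    simp [cnt]
  simp [Bpred, cntPred, h0]

lemma swP_one {D : ℕ} (p : ℕ → ℝ) (x : ℕ → Fin D) : swP D p x 1 = 1 / D := by
  unfold swP
  rw [Finset.sum_range_succ, Finset.sum_range_one]
  have h1 : Ppart D p x 1 ((0:ℤ) - 1) = p 0 * (1 / D) := by
    simp [Ppart, Bpred]
  have h2 : Ppart D p x 1 ((1:ℤ) - 1) = (1 - p 0) * (1 / D) := by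
    simp [Ppart, Bpred_nil_one]
  norm_num at h1 h2 ⊢
  rw [h1, h2]
  ring

lemma claim1 {D : ℕ} (hD : 0 < D) (p : ℕ → ℝ) :
    ∀ n : ℕ, ∀ hn : 0 < n,
      ∑ v : Fin n → Fin D, swP D p (fun i => v ⟨i % n, Nat.mod_lt i hn⟩) n = 1 := by
  intro n
  induction n with
  | zero => intro h; omega
  | succ n ih =>
    intro hn
    rcases Nat.eq_zero_or_pos n with rfl | hn'
    · have hone : ∀ v : Fin (0+1) → Fin D,
          swP D p (fun i => v ⟨i % (0+1), Nat.mod_lt i hn⟩) (0+1) = 1/(D:ℝ) :=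
        fun v => swP_one p _
      rw [Finset.sum_congr rfl fun v _ => hone v]
      rw [Finset.sum_const, Finset.card_univ]
      have hc : Fintype.card (Fin 1 → Fin D) = D := by
        rw [Fintype.card_fun]
        simp
      rw [hc, nsmul_eq_mul]
      field_simp
    · set e := Fin.snocEquiv (fun _ : Fin (n+1) => Fin D) with he
      rw [← Fintype.sum_equiv e
        (fun q => swP D p (fun i => (e q) ⟨i % (n+1), Nat.mod_lt i hn⟩) (n+1))
        (fun v => swP D p (fun i => v ⟨i % (n+1), Nat.mod_lt i hn⟩) (n+1))
        (fun q => rfl)]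
      rw [Fintype.sum_prod_type]
      rw [Finset.sum_comm]
      have key : ∀ (w : Fin n → Fin D) (a : Fin D),
          swP D p (fun i => (e (a, w)) ⟨i % (n+1), Nat.mod_lt i hn⟩) (n+1)
            = swP D p (Function.update (fun i => w ⟨i % n, Nat.mod_lt i hn'⟩) n a) (n+1) := by
        intro w a
        refine swP_congr p fun i hi => ?_
        have hie : (e (a, w)) = Fin.snoc w a := rfl
        rw [hie]
        rcases Nat.lt_or_ge i n with h | h
        · have h1 : i % (n+1) = i := Nat.mod_eq_of_lt (by omega)
          have h2 : i % n = i := Nat.mod_eq_of_lt h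
          rw [Function.update_of_ne (by omega)]
          simp only [Fin.snoc, h1, h2]
          rw [dif_pos h]
          rfl
        · have hin : i = n := by omega
          subst hin
          have h1 : i % (i+1) = i := Nat.mod_eq_of_lt (by omega)
          rw [Function.update_self]
          simp only [Fin.snoc, h1]
          rw [dif_neg (by omega)]
          rfl
      rw [Finset.sum_congr rfl fun w _ => Finset.sum_congr rfl fun a _ => key w a]
      rw [Finset.sum_congr rfl fun w _ => swP_consistent hD p _ n hn']
      exact ih hn'

/-- The plain switch distribution is a consistent probability assignment on strings:
for every `n ≥ 1`, `Σ_{x_1^n} P(x_1^n) = 1` (sum over all strings of length `n`), and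
`Σ_{a=1}^{D} P(x_1^n a) = P(x_1^n)` for every string `x_1^n`. -/
theorem plain_switch_consistent
    (D : ℕ) (hD : 2 ≤ D) (p : ℕ → ℝ) (hp : ∀ n, p n ∈ Set.Ioo (0 : ℝ) 1)
    (hprod : ∃ L, 0 < L ∧ Tendsto (fun N : ℕ => ∏ i ∈ Finset.range N, p i) atTop (𝓝 L)) :
    (∀ n : ℕ, ∀ hn : 0 < n,
      ∑ v : Fin n → Fin D, swP D p (fun i => v ⟨i % n, Nat.mod_lt i hn⟩) n = 1) ∧
    (∀ x : ℕ → Fin D, ∀ n : ℕ, 1 ≤ n →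
      ∑ a : Fin D, swP D p (Function.update x n a) (n + 1) = swP D p x n) := by
  have hD0 : 0 < D := by omega
  exact ⟨claim1 hD0 p, fun x n hn => swP_consistent hD0 p x n hn⟩
end

section
/- Let x_1^n be a string over {1,...,D} and let s ≥ L(x_1^n), where L denotes the depth. Then for every l with 0 ≤ l ≤ n−1 and every k ≥ s, the adaptive Markov predictors computed along x_1^n satisfy B(x_{l+1}|x_1^l, k) = B(x_{l+1}|x_1^l, s), where counts of substrings whose indices fall outside the string are taken to be zero. -/
open Filter MeasureTheory
open scoped Topology

/-- The depth `L(z)`: maximal length of a substring occurring at least twice in `z`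
(`0` if there is none). -/
noncomputable def depth {D : ℕ} (z : List (Fin D)) : ℕ :=
  sSup {k | ∃ w : List (Fin D), w.length = k ∧ 2 ≤ cnt w z}

/-!
For `k ≥ s ≥ L(x_1^n)` the context of order `k + 1` at time `l` is a string of length
`k + 1 > L(x_1^n)`, so it occurs only once in `x_1^n`, namely as the suffix of `x_1^l`.
Hence it occurs neither in `x_1^{l-1}` nor, followed by another symbol, in `x_1^l`: both
counts in the recursion vanish and `B(·, k + 1) = (0 + B(·, k)) / (0 + 1) = B(·, k)`.
When the context does not fit into `x_1^l` the recursion is the identity by definition.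
-/

def OccursAt {α : Type*} (w z : List α) (i : ℕ) : Prop :=
  (z.drop i).take w.length = w

namespace OccursAt

variable {α : Type*} {w z : List α} {i : ℕ}

lemma length_le (h : OccursAt w z i) : w.length ≤ z.length := by
  have hl := congrArg List.length h
  simp only [List.length_take, List.length_drop] at hl
  omega

lemma add_length_le (hw : w ≠ []) (h : OccursAt w z i) : i + w.length ≤ z.length := by
  have hl := congrArg List.length h
  simp only [List.length_take, List.length_drop] at hl
  have := List.length_pos_iff.2 hw
  omega

lemma of_isPrefix {xs : List α} (h : OccursAt w xs i) (hxs : xs <+: z) : OccursAt w z i := by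
  have hpre := (hxs.drop i).take w.length
  rw [h] at hpre
  exact (hpre.eq_of_length_le (by simp)).symm

lemma of_append {a : α} (h : OccursAt (w ++ [a]) z i) : OccursAt w z i := by
  have h' := congrArg (List.take w.length) h
  rwa [List.take_take, Nat.min_eq_left (by simp), List.take_left] at h'

end OccursAt

section Counting

variable {D : ℕ} {w z : List (Fin D)}

lemma mem_cnt_filter_iff {i : ℕ} (hw : w ≠ []) :
    i ∈ (List.range (z.length - w.length + 1)).filter (fun j => (z.drop j).take w.length = w)
      ↔ OccursAt w z i := by
  simp only [List.mem_filter, List.mem_range, decide_eq_true_eq]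
  refine ⟨And.right, fun h => ⟨?_, h⟩⟩
  have := h.add_length_le hw
  omega

lemma cnt_eq_zero_of_forall_not_occursAt (h : ∀ i, ¬ OccursAt w z i) : cnt w z = 0 := by
  rw [cnt, List.length_eq_zero_iff, List.filter_eq_nil_iff]
  simpa [OccursAt] using fun i _ => h i

lemma two_le_cnt_of_occursAt (hw : w ≠ []) {i j : ℕ} (hij : i ≠ j)
    (hi : OccursAt w z i) (hj : OccursAt w z j) : 2 ≤ cnt w z := by
  classical
  rw [cnt, ← List.toFinset_card_of_nodup (List.nodup_range.filter _)]
  exact Finset.one_lt_card.2 ⟨i, List.mem_toFinset.2 ((mem_cnt_filter_iff hw).2 hi),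
    j, List.mem_toFinset.2 ((mem_cnt_filter_iff hw).2 hj), hij⟩

lemma length_le_of_cnt_ne_zero (h : cnt w z ≠ 0) : w.length ≤ z.length := by
  obtain ⟨i, hi⟩ := List.exists_mem_of_ne_nil _ (List.ne_nil_of_length_pos (Nat.pos_of_ne_zero h))
  have hocc : (z.drop i).take w.length = w := of_decide_eq_true (List.mem_filter.1 hi).2
  exact OccursAt.length_le hocc

lemma length_le_depth_of_two_le_cnt (h : 2 ≤ cnt w z) : w.length ≤ depth z := by
  have hbdd : BddAbove {k | ∃ v : List (Fin D), v.length = k ∧ 2 ≤ cnt v z} := by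
    refine ⟨z.length, ?_⟩
    rintro _ ⟨v, rfl, hv⟩
    exact length_le_of_cnt_ne_zero (by omega)
  exact le_csSup hbdd (⟨w, rfl, h⟩ : ∃ v : List (Fin D), v.length = w.length ∧ 2 ≤ cnt v z)

lemma OccursAt.eq_of_depth_lt {i j : ℕ} (hz : depth z < w.length)
    (hi : OccursAt w z i) (hj : OccursAt w z j) : i = j := by
  have hw : w ≠ [] := List.ne_nil_of_length_pos (by omega)
  by_contra hij
  have := length_le_depth_of_two_le_cnt (two_le_cnt_of_occursAt hw hij hi hj)
  omega

end Counting

section Context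

variable {D : ℕ} {xs z : List (Fin D)} {m : ℕ}

lemma eq_of_occursAt_suffix (hxs : xs <+: z) (hz : depth z < m) (hm : m ≤ xs.length) {i : ℕ}
    (hi : OccursAt (xs.drop (xs.length - m)) xs i) : i = xs.length - m := by
  have hlast : OccursAt (xs.drop (xs.length - m)) xs (xs.length - m) := by
    simp [OccursAt]
  exact OccursAt.eq_of_depth_lt (by rw [List.length_drop]; omega) (hi.of_isPrefix hxs) (hlast.of_isPrefix hxs)

lemma cnt_suffix_append_eq_zero (hxs : xs <+: z) (hz : depth z < m) (hm : m ≤ xs.length)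
    (a : Fin D) : cnt (xs.drop (xs.length - m) ++ [a]) xs = 0 := by
  refine cnt_eq_zero_of_forall_not_occursAt fun i hi => ?_
  have hend := hi.add_length_le (by simp)
  have hstart := eq_of_occursAt_suffix hxs hz hm hi.of_append
  simp only [List.length_append, List.length_drop, List.length_singleton] at hend
  omega

lemma cntPred_suffix_eq_zero (hxs : xs <+: z) (hz : depth z < m) (hm : m ≤ xs.length) :
    cntPred (xs.drop (xs.length - m)) xs = 0 := by
  have hne : xs ≠ [] := List.ne_nil_of_length_pos (by omega)
  rw [cntPred, if_neg hne]
  refine cnt_eq_zero_of_forall_not_occursAt fun i hi => ?_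
  have hend := hi.add_length_le (List.ne_nil_of_length_pos (by rw [List.length_drop]; omega))
  have hstart := eq_of_occursAt_suffix hxs hz hm (hi.of_isPrefix xs.dropLast_prefix)
  simp only [List.length_drop, List.length_dropLast] at hend
  omega

end Context

section Predictor

variable {D : ℕ} {xs z : List (Fin D)} {a : Fin D} {k : ℕ}

lemma Bpred_succ_of_cnt_eq_zero (hnum : cnt (xs.drop (xs.length - k) ++ [a]) xs = 0)
    (hden : cntPred (xs.drop (xs.length - k)) xs = 0) : Bpred D xs a (k + 1) = Bpred D xs a k := by
  rw [Bpred]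
  split_ifs <;> simp [hnum, hden]

lemma Bpred_succ_of_depth_lt (hxs : xs <+: z) (hz : depth z < k) :
    Bpred D xs a (k + 1) = Bpred D xs a k := by
  by_cases hk : k ≤ xs.length
  · exact Bpred_succ_of_cnt_eq_zero (cnt_suffix_append_eq_zero hxs hz hk a)
      (cntPred_suffix_eq_zero hxs hz hk)
  · rw [Bpred, if_neg hk]

lemma Bpred_succ_eq_of_depth_le {s : ℕ} (hxs : xs <+: z) (hs : depth z ≤ s) (hk : s ≤ k) :
    Bpred D xs a (k + 1) = Bpred D xs a (s + 1) := by
  induction k, hk using Nat.le_induction with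
  | base => rfl
  | succ k hk ih => rw [Bpred_succ_of_depth_lt hxs (by omega), ih]

end Predictor

lemma pref_prefix_pref {D : ℕ} (x : ℕ → Fin D) {l n : ℕ} (h : l ≤ n) : pref x l <+: pref x n := by
  have htake : pref x l = (pref x n).take l := by
    rw [pref, pref, ← List.map_take, List.take_range, Nat.min_eq_left h]
  exact htake ▸ List.take_prefix l _

theorem predictor_stabilizes_above_depth_general
    (D : ℕ) (n : ℕ) (x : ℕ → Fin D) (s : ℕ)
    (hs : depth (pref x n) ≤ s) :
    ∀ l < n, ∀ k : ℕ, s ≤ k →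
      Bpred D (pref x l) (x l) (k + 1) = Bpred D (pref x l) (x l) (s + 1) :=
  fun _ hl _ hk => Bpred_succ_eq_of_depth_le (pref_prefix_pref x hl.le) hs hk

/-- Let `x_1^n` be a string over `{1,...,D}` and `s ≥ L(x_1^n)`, where `L` denotes the
depth. Then for every `l` with `0 ≤ l ≤ n−1` and every `k ≥ s`, the adaptive Markov
predictors computed along `x_1^n` satisfy `B(x_{l+1}|x_1^l, k) = B(x_{l+1}|x_1^l, s)`. -/
theorem predictor_stabilizes_above_depth
    (D : ℕ) (hD : 2 ≤ D) (n : ℕ) (x : ℕ → Fin D) (s : ℕ)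
    (hs : depth (pref x n) ≤ s) :
    ∀ l < n, ∀ k : ℕ, s ≤ k →
      Bpred D (pref x l) (x l) (k + 1) = Bpred D (pref x l) (x l) (s + 1) :=
  predictor_stabilizes_above_depth_general D n x s hs
end

section
/- Let y_1^j be a training string and x_1^n a string over {1,...,D}, and let s ≥ L(y_1^j x_1^n), where L denotes the depth of the concatenated string. Then for every l with 0 ≤ l ≤ n−1 and every k ≥ s, the preadapted predictors satisfy B(x_{l+1}|x_1^l, k) = B(x_{l+1}|x_1^l, s), where counts of substrings whose indices fall outside the available string are taken to be zero. -/
open Filter MeasureTheory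
open scoped Topology

/-- Preadapted Markov predictor with training data `y`: the natural-number index
corresponds to the Markov order shifted by one, so `BpredPre D y xs a (k+1) = B(a|xs,k)`
and `BpredPre D y xs a 0 = 1/D`, where
`B(x_{n+1}|x_1^n, k) = (c(x_{n+1-k}^{n+1}|y_1^j x_1^n) + B(x_{n+1}|x_1^n, k-1)) /
(c(x_{n+1-k}^{n}|y_1^j x_1^{n-1}) + 1)`: counts are taken in the concatenated string,
and counts of substrings whose indices fall outside the available string are zero. -/
noncomputable def BpredPre (D : ℕ) (y xs : List (Fin D)) (a : Fin D) : ℕ → ℝ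
  | 0 => 1 / D
  | k + 1 =>
    if k ≤ xs.length then
      ((cnt (xs.drop (xs.length - k) ++ [a]) (y ++ xs) : ℝ) + BpredPre D y xs a k) /
      ((cntPred (xs.drop (xs.length - k)) (y ++ xs) : ℝ) + 1)
    else BpredPre D y xs a k

/-- Partial preadapted switch distribution `P(x_1^n, k)` with Markov order `k : ℤ`. -/
noncomputable def PpartPre (D : ℕ) (p : ℕ → ℝ) (y : List (Fin D)) (x : ℕ → Fin D) :
    ℕ → ℤ → ℝ
  | 0, _ => 0
  | 1, k =>
    if k = -1 then p 0 * BpredPre D y [] (x 0) 0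
    else if k = 0 then (1 - p 0) * BpredPre D y [] (x 0) 1
    else 0
  | n + 2, k =>
    if -1 ≤ k ∧ k ≤ (n : ℤ) + 1 then
      (p (n + 1) * PpartPre D p y x (n + 1) k +
        (1 - p (n + 1)) * PpartPre D p y x (n + 1) (k - 1)) *
        BpredPre D y (pref x (n + 1)) (x (n + 1)) (k + 1).toNat
    else 0

/-- The preadapted switch distribution `P(x_1^n) = Σ_{k=-1}^{n-1} P(x_1^n, k)`. -/
noncomputable def swPre (D : ℕ) (p : ℕ → ℝ) (y : List (Fin D)) (x : ℕ → Fin D) (n : ℕ) : ℝ :=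
  ∑ kk ∈ Finset.range (n + 1), PpartPre D p y x n ((kk : ℤ) - 1)

/-!
If `m` exceeds the depth of `Z = y ++ x_1^n`, every string of length `m` occurs at most once in
any prefix `z = y ++ x_1^l` of `Z`. The context `u` of order `m` is the length-`m` suffix of `z`,
so this one occurrence is the terminal one: `u` does not occur in `z` with its last symbol removed,
and `u` followed by any symbol does not occur in `z`. Both counts in the recursion for order `m`
therefore vanish, so `B(· | x_1^l, m) = B(· | x_1^l, m - 1)` for every `m > L(Z)`.
-/

open Finset

namespace Preadapted

variable {D : ℕ}

lemma cnt_eq_card (w z : List (Fin D)) :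
    cnt w z = #{i ∈ range (z.length + 1) | w <+: z.drop i} := by
  rw [cnt, ← List.toFinset_card_of_nodup (List.nodup_range.filter _)]
  congr 1
  ext i
  have hpre : (z.drop i).take w.length = w ↔ w <+: z.drop i := by
    rw [List.prefix_iff_eq_take, eq_comm]
  have hlen (h : w <+: z.drop i) : w.length ≤ z.length - i := List.length_drop ▸ h.length_le
  simp only [List.mem_toFinset, List.mem_filter, List.mem_range, mem_filter, mem_range,
    decide_eq_true_eq, hpre]
  constructor
  · rintro ⟨hi, hw⟩
    exact ⟨by omega, hw⟩
  · rintro ⟨hi, hw⟩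
    have := hlen hw
    exact ⟨by omega, hw⟩

lemma cnt_le_cnt_of_prefix (w : List (Fin D)) {z₁ z₂ : List (Fin D)} (h : z₁ <+: z₂) :
    cnt w z₁ ≤ cnt w z₂ := by
  simp only [cnt_eq_card]
  refine card_le_card fun i hi => ?_
  simp only [mem_filter, mem_range] at hi ⊢
  exact ⟨by have := h.length_le; omega, hi.2.trans (h.drop i)⟩

lemma length_le_of_cnt_pos {w z : List (Fin D)} (h : 0 < cnt w z) : w.length ≤ z.length := by
  rw [cnt_eq_card, card_pos] at h
  obtain ⟨i, hi⟩ := h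
  exact (mem_filter.1 hi).2.length_le.trans (List.length_drop ▸ Nat.sub_le _ _)

lemma length_le_depth {w z : List (Fin D)} (h : 2 ≤ cnt w z) : w.length ≤ depth z := by
  refine le_csSup ⟨z.length, ?_⟩ ⟨w, rfl, h⟩
  rintro k ⟨v, rfl, hv⟩
  exact length_le_of_cnt_pos (by omega)

lemma cnt_le_one_of_depth_lt {w z Z : List (Fin D)} (hz : z <+: Z) (hw : depth Z < w.length) :
    cnt w z ≤ 1 := by
  by_contra! h
  have := length_le_depth ((cnt_le_cnt_of_prefix w hz).trans' h)
  omega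

lemma eq_of_cnt_le_one {w z : List (Fin D)} (h : cnt w z ≤ 1) {i j : ℕ}
    (hi : i ≤ z.length) (hj : j ≤ z.length) (hwi : w <+: z.drop i) (hwj : w <+: z.drop j) :
    i = j := by
  rw [cnt_eq_card, card_le_one] at h
  exact h i (by simp [Nat.lt_succ_of_le hi, hwi]) j (by simp [Nat.lt_succ_of_le hj, hwj])

lemma prefix_drop_of_suffix {w z : List (Fin D)} (h : w <:+ z) :
    w <+: z.drop (z.length - w.length) :=
  List.suffix_iff_eq_drop.1 h ▸ List.prefix_refl w

lemma cnt_append_singleton_eq_zero {u z : List (Fin D)} (hu : cnt u z ≤ 1) (hs : u <:+ z)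
    (a : Fin D) : cnt (u ++ [a]) z = 0 := by
  rw [cnt_eq_card, card_eq_zero, filter_eq_empty_iff]
  intro i hi hocc
  have hlen : u.length + 1 ≤ z.length - i := by simpa using hocc.length_le
  have := eq_of_cnt_le_one hu (Nat.le_of_lt_succ (mem_range.1 hi)) (Nat.sub_le _ _)
    ((List.prefix_append u [a]).trans hocc) (prefix_drop_of_suffix hs)
  omega

lemma cntPred_eq_zero {u z : List (Fin D)} (hu : cnt u z ≤ 1) (hs : u <:+ z) :
    cntPred u z = 0 := by
  rw [cntPred]
  split_ifs with hz
  · rfl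
  rw [cnt_eq_card, card_eq_zero, filter_eq_empty_iff]
  intro i hi hocc
  have hlen : u.length ≤ z.length - 1 - i := by simpa using hocc.length_le
  have hi : i ≤ z.length - 1 := by simpa [Nat.lt_succ_iff] using hi
  have hpos : 0 < z.length := List.length_pos_iff.2 hz
  have := eq_of_cnt_le_one hu (by omega) (Nat.sub_le _ _)
    (hocc.trans ((List.dropLast_prefix z).drop i)) (prefix_drop_of_suffix hs)
  omega

lemma BpredPre_succ_eq_of_depth_lt {y xs Z : List (Fin D)} (a : Fin D) {m : ℕ}
    (hZ : y ++ xs <+: Z) (hm : depth Z < m) :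
    BpredPre D y xs a (m + 1) = BpredPre D y xs a m := by
  rw [BpredPre]
  split_ifs with hmxs
  · set u := xs.drop (xs.length - m)
    have hsuf : u <:+ y ++ xs := (List.drop_suffix _ _).trans (List.suffix_append y xs)
    have hu : cnt u (y ++ xs) ≤ 1 := cnt_le_one_of_depth_lt hZ (by simp [u]; omega)
    simp [cnt_append_singleton_eq_zero hu hsuf, cntPred_eq_zero hu hsuf]
  · rfl

lemma BpredPre_eq_of_depth_le {y xs Z : List (Fin D)} (a : Fin D) {s k : ℕ}
    (hZ : y ++ xs <+: Z) (hs : depth Z ≤ s) (hk : s ≤ k) :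
    BpredPre D y xs a (k + 1) = BpredPre D y xs a (s + 1) := by
  induction k, hk using Nat.le_induction with
  | base => rfl
  | succ k hk ih => rw [BpredPre_succ_eq_of_depth_lt a hZ (by omega), ih]

lemma pref_prefix (x : ℕ → Fin D) {l n : ℕ} (h : l ≤ n) : pref x l <+: pref x n := by
  simpa [pref, ← List.map_take, List.take_range, min_eq_left h] using
    List.take_prefix l (pref x n)

end Preadapted

theorem preadapted_predictor_stabilizes_above_depth_general
    (D : ℕ) (y : List (Fin D)) (n : ℕ) (x : ℕ → Fin D) (s : ℕ)
    (hs : depth (y ++ pref x n) ≤ s) :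
    ∀ l < n, ∀ k : ℕ, s ≤ k →
      BpredPre D y (pref x l) (x l) (k + 1) =
        BpredPre D y (pref x l) (x l) (s + 1) := by
  intro l hl k hk
  exact Preadapted.BpredPre_eq_of_depth_le (x l)
    ((List.prefix_append_right_inj y).2 (Preadapted.pref_prefix x hl.le)) hs hk

/-- Let `y_1^j` be a training string, `x_1^n` a string over `{1,...,D}`, and
`s ≥ L(y_1^j x_1^n)`, where `L` denotes the depth of the concatenated string. Then for
every `l` with `0 ≤ l ≤ n−1` and every `k ≥ s`, the preadapted predictors satisfy
`B(x_{l+1}|x_1^l, k) = B(x_{l+1}|x_1^l, s)`. -/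
theorem preadapted_predictor_stabilizes_above_depth
    (D : ℕ) (hD : 2 ≤ D) (y : List (Fin D)) (n : ℕ) (x : ℕ → Fin D) (s : ℕ)
    (hs : depth (y ++ pref x n) ≤ s) :
    ∀ l < n, ∀ k : ℕ, s ≤ k →
      BpredPre D y (pref x l) (x l) (k + 1) =
        BpredPre D y (pref x l) (x l) (s + 1) :=
  preadapted_predictor_stabilizes_above_depth_general D y n x s hs
end
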